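/- (Remark 2.2) Fix any adjacency matrix A ∈ 𝒜 and let I be the rate function associated with A. Then for every m ∈ P(Δ°), I(m) ≤ tilde I(m). -/

import Mathlib

open MeasureTheory Filter Set
open scoped ENNReal NNReal

noncomputable section

/-- The probability simplex `P(Δ°)`, identified with the standard simplex in `ℝ^d`. -/
def PD (d : ℕ) : Set (Fin d → ℝ) := stdSimplex ℝ (Fin d)

/-- ℓ¹ norm on `ℝ^d`. -/
def l1 {d : ℕ} (v : Fin d → ℝ) : ℝ := ∑ x, |v x|

/-- Transition probability kernels on `Δ°` (row-stochastic matrices). -/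
def IsKernel {d : ℕ} (K : Matrix (Fin d) (Fin d) ℝ) : Prop :=
  ∀ x, (∀ y, 0 ≤ K x y) ∧ (∑ y, K x y) = 1

/-- Adjacency matrix: entries are 0 or 1. -/
def IsAdjacency {d : ℕ} (A : Matrix (Fin d) (Fin d) ℝ) : Prop :=
  ∀ x y, A x y = 0 ∨ A x y = 1

/-- Irreducible adjacency matrix: for each `x, y` some positive power has positive `(x,y)` entry. -/
def IsIrreducibleAdj {d : ℕ} (A : Matrix (Fin d) (Fin d) ℝ) : Prop :=
  IsAdjacency A ∧ ∀ x y, ∃ k : ℕ, 0 < (A ^ (k + 1)) x y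

/-- `A ∈ 𝒜`: `A` is an adjacency matrix and `A x y = 0` forces `G m x y = 0` on the simplex. -/
def MemA {d : ℕ} (G : (Fin d → ℝ) → Matrix (Fin d) (Fin d) ℝ)
    (A : Matrix (Fin d) (Fin d) ℝ) : Prop :=
  IsAdjacency A ∧ ∀ x y, A x y = 0 → ∀ m ∈ PD d, G m x y = 0

open Classical in
/-- Relative entropy `R(ν ‖ μ)` of probability vectors on a finite type, valued in `ℝ≥0∞`. -/
def relEnt {S : Type*} [Fintype S] (ν μ : S → ℝ) : ℝ≥0∞ :=
  if ∀ s, μ s = 0 → ν s = 0 then ENNReal.ofReal (∑ s, ν s * Real.log (ν s / μ s)) else ⊤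

/-- `η ∈ U(m)` together with the (unique) solution `M` of the equation (P3). -/
structure Admissible {d : ℕ} (A : Matrix (Fin d) (Fin d) ℝ)
    (G : (Fin d → ℝ) → Matrix (Fin d) (Fin d) ℝ) (m : Fin d → ℝ)
    (η : ℝ → Fin d → Fin d → ℝ) (M : ℝ → Fin d → ℝ) : Prop where
  meas : ∀ x y, Measurable fun s => η s x y
  prob : ∀ s, 0 ≤ s → (∀ x y, 0 ≤ η s x y) ∧ (∑ x, ∑ y, η s x y) = 1
  p1 : ∀ x y, A x y = 0 → ∀ t, 0 ≤ t → (∫ s in (0:ℝ)..t, η s x y) = 0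
  p2 : ∀ᵐ s ∂(volume.restrict (Ici (0:ℝ))), ∀ x, (∑ y, η s x y) = ∑ y, η s y x
  contM : Continuous M
  sol : ∀ t, 0 ≤ t → ∀ x,
    M t x = m x - (∫ s in (0:ℝ)..t, ∑ y, η s x y) + ∫ s in (0:ℝ)..t, M s x
  memM : ∀ t, 0 ≤ t → M t ∈ PD d
  exT : ∃ T : ℝ → Fin d → Fin d → ℝ, Continuous T ∧
    (∀ s t, 0 ≤ s → 0 ≤ t → (∑ x, ∑ y, |T t x y - T s x y|) ≤ 2 * |t - s|) ∧
    ∀ t, 0 ≤ t →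
      (∀ x y, 0 ≤ T t x y) ∧ (∀ x, (∑ y, T t x y) = M t x) ∧
      (∀ y, (∑ x, T t x y) = M t y) ∧ (∀ x y, A x y = 0 → T t x y = 0)

/-- The discounted relative-entropy cost of a control `η` with associated trajectory `M`. -/
def cost {d : ℕ} (G : (Fin d → ℝ) → Matrix (Fin d) (Fin d) ℝ)
    (η : ℝ → Fin d → Fin d → ℝ) (M : ℝ → Fin d → ℝ) : ℝ≥0∞ :=
  ∫⁻ s in Ici (0:ℝ), ENNReal.ofReal (Real.exp (-s)) *
    relEnt (fun xy : Fin d × Fin d => η s xy.1 xy.2)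
      (fun xy : Fin d × Fin d => (∑ y, η s xy.1 y) * G (M s) xy.1 xy.2)

/-- The rate function `I` associated with the adjacency matrix `A`. -/
def rateI {d : ℕ} (A : Matrix (Fin d) (Fin d) ℝ)
    (G : (Fin d → ℝ) → Matrix (Fin d) (Fin d) ℝ) (m : Fin d → ℝ) : ℝ≥0∞ :=
  ⨅ (η : ℝ → Fin d → Fin d → ℝ) (M : ℝ → Fin d → ℝ) (_ : Admissible A G m η M),
    cost G η M

/-- Extended-real logarithm of an extended nonnegative real. -/
def elog (x : ℝ≥0∞) : EReal :=
  if x = 0 then ⊥ else if x = ⊤ then ⊤ else ((Real.log x.toReal : ℝ) : EReal)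

/-- Assumption L (Lipschitz continuity), together with the standing requirement that
`G` maps the simplex into transition kernels. -/
def AssumptionL {d : ℕ} (G : (Fin d → ℝ) → Matrix (Fin d) (Fin d) ℝ) : Prop :=
  (∀ m ∈ PD d, IsKernel (G m)) ∧
  ∃ LG : ℝ, 0 < LG ∧ ∀ m ∈ PD d, ∀ m' ∈ PD d,
    (∑ x, ∑ y, |G m x y - G m' x y|) ≤ LG * l1 (fun x => m x - m' x)

/-- `tilde I(m) = inf { R(γ ‖ m ⊗ G(m)) : γ has both marginals equal to m }`. -/
def tildeI {d : ℕ} (G : (Fin d → ℝ) → Matrix (Fin d) (Fin d) ℝ) (m : Fin d → ℝ) : ℝ≥0∞ :=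
  ⨅ (γ : Fin d → Fin d → ℝ)
    (_ : (∀ x y, 0 ≤ γ x y) ∧ (∀ x, (∑ y, γ x y) = m x) ∧ (∀ y, (∑ x, γ x y) = m y)),
    relEnt (fun xy : Fin d × Fin d => γ xy.1 xy.2)
      (fun xy : Fin d × Fin d => m xy.1 * G m xy.1 xy.2)
/-!
A coupling `γ` of `m` with itself yields the stationary control `η(s) = γ`, `M(s) = m`: both
marginals of `γ` are `m`, so `M` stays at `m` and `T(t) = γ` witnesses (P3). If
`R(γ ‖ m ⊗ G(m))` is finite then `γ` vanishes wherever `G(m)` does, in particular off `A₊`,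
which gives (P1). The running cost is then constantly `R(γ ‖ m ⊗ G(m))`, and `∫₀^∞ e^{-s} ds = 1`.
-/

lemma lintegral_ofReal_exp_neg_Ici :
    ∫⁻ s in Ici (0:ℝ), ENNReal.ofReal (Real.exp (-s)) = 1 := by
  rw [Measure.restrict_congr_set Ioi_ae_eq_Ici.symm,
    ← ofReal_integral_eq_lintegral_ofReal (integrableOn_exp_neg_Ioi 0)
      (Eventually.of_forall fun s => (Real.exp_pos _).le),
    integral_exp_neg_Ioi_zero, ENNReal.ofReal_one]

lemma absCont_of_relEnt_ne_top {S : Type*} [Fintype S] {ν μ : S → ℝ} (h : relEnt ν μ ≠ ⊤) :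
    ∀ s, μ s = 0 → ν s = 0 := by
  by_contra hνμ
  exact h (if_neg hνμ)

section Stationary

variable {d : ℕ} {G : (Fin d → ℝ) → Matrix (Fin d) (Fin d) ℝ} {m : Fin d → ℝ}
  {γ : Fin d → Fin d → ℝ}

lemma admissible_const {A : Matrix (Fin d) (Fin d) ℝ} (hm : m ∈ PD d)
    (hγ : (∀ x y, 0 ≤ γ x y) ∧ (∀ x, ∑ y, γ x y = m x) ∧ (∀ y, ∑ x, γ x y = m y))
    (hγA : ∀ x y, A x y = 0 → γ x y = 0) :
    Admissible A G m (fun _ => γ) (fun _ => m) := by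
  obtain ⟨hγ_nonneg, hγ_fst, hγ_snd⟩ := hγ
  refine
    { meas := fun _ _ => measurable_const
      prob := fun _ _ => ⟨hγ_nonneg, by simpa only [hγ_fst] using hm.2⟩
      p1 := fun x y hxy _ _ => by simp [hγA x y hxy]
      p2 := Eventually.of_forall fun _ x => by rw [hγ_fst, hγ_snd]
      contM := continuous_const
      sol := fun t _ x => by simp only [hγ_fst, intervalIntegral.integral_const]; ring
      memM := fun _ _ => hm
      exT := ⟨fun _ => γ, continuous_const, fun s t _ _ => ?_,
        fun _ _ => ⟨hγ_nonneg, hγ_fst, hγ_snd, hγA⟩⟩ }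
  simp only [sub_self, abs_zero, Finset.sum_const_zero]
  positivity

lemma cost_const :
    cost G (fun _ => γ) (fun _ => m) =
      relEnt (fun xy : Fin d × Fin d => γ xy.1 xy.2)
        (fun xy : Fin d × Fin d => (∑ y, γ xy.1 y) * G m xy.1 xy.2) := by
  rw [cost, lintegral_mul_const _ (by fun_prop), lintegral_ofReal_exp_neg_Ici, one_mul]

end Stationary

theorem rateI_le_tildeI {d : ℕ}
    (G : (Fin d → ℝ) → Matrix (Fin d) (Fin d) ℝ)
    (A : Matrix (Fin d) (Fin d) ℝ) (hA : MemA G A)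
    (m : Fin d → ℝ) (hm : m ∈ PD d) :
    rateI A G m ≤ tildeI G m := by
  refine le_iInf₂ fun γ hγ => ?_
  by_cases hR : relEnt (fun xy : Fin d × Fin d => γ xy.1 xy.2)
      (fun xy : Fin d × Fin d => m xy.1 * G m xy.1 xy.2) = ⊤
  · exact hR ▸ le_top
  have hγA : ∀ x y, A x y = 0 → γ x y = 0 := fun x y hxy =>
    absCont_of_relEnt_ne_top hR (x, y) (by simp [hA.2 x y hxy m hm])
  calc rateI A G m ≤ cost G (fun _ => γ) (fun _ => m) :=
        iInf₂_le_of_le _ _ (iInf_le _ (admissible_const hm hγ hγA))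
    _ = _ := by simp only [cost_const, hγ.2.1]
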